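/- Let m ≥ 1 and n ≥ 1 be integers. Then the double product ∏_{i=1}^{m} ∏_{j=1}^{n} (2 cos(2 i π / m) + 2 cos(2 j π / n)) equals 4^gcd(m,n) if both m and n are odd, and equals 0 otherwise. -/

import Mathlib

/-!
Write `ζ = exp (2πi/m)`, `ω = exp (2πi/n)`. Each factor is `α + α⁻¹ + β + β⁻¹` with `α = ζ ^ i`,
`β = ω ^ j`, and this equals `(α + β)(1 + αβ) / (αβ)`. For odd `n`, `∏ⱼ (x + ω ^ j y) = x ^ n + y ^ n`,
so the product over `j` collapses to `(1 + α ^ n)² / α ^ n`. The numbers `ζ ^ (n i)` run `gcd m n`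
times through the roots of unity of odd order `m / gcd m n`, whence `∏ᵢ (1 + ζ ^ (n i)) = 2 ^ gcd m n`,
while the denominators multiply to `1`. If `m` (say) is even, the factor `i = m / 2`, `j = n` is
`2 cos π + 2 cos 2π = 0`.
-/

open Real Finset

theorem Finset.prod_Icc_one_eq_prod_range {M : Type*} [CommMonoid M] {f : ℕ → M} {n : ℕ}
    (hf : f n = f 0) : ∏ i ∈ Icc 1 n, f i = ∏ i ∈ range n, f i := by
  cases n with
  | zero => simp
  | succ k =>
    rw [prod_range_succ', ← hf, ← prod_range_succ (fun i => f (i + 1)), ← Ico_add_one_right_eq_Icc,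
      prod_Ico_eq_prod_range]
    simp [add_comm]

theorem Function.Periodic.prod_range_mul {M : Type*} [CommMonoid M] {f : ℕ → M} {p : ℕ}
    (hf : Function.Periodic f p) (d : ℕ) :
    ∏ i ∈ range (d * p), f i = (∏ i ∈ range p, f i) ^ d := by
  induction d with
  | zero => simp
  | succ d ih =>
    rw [add_one_mul, prod_range_add, ih, pow_succ]
    congr 1
    exact prod_congr rfl fun i _ => by simpa [add_comm] using hf.nat_mul d i

theorem add_inv_add_add_inv {K : Type*} [Field K] {α β : K} (hα : α ≠ 0) (hβ : β ≠ 0) :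
    α + α⁻¹ + (β + β⁻¹) = (α + β) * (1 + β * α) / (α * β) := by
  field_simp
  ring

namespace IsPrimitiveRoot

theorem pow_div_gcd {M : Type*} [CommMonoid M] {ζ : M} {k : ℕ} (hζ : IsPrimitiveRoot ζ k)
    (hk : k ≠ 0) (n : ℕ) : IsPrimitiveRoot (ζ ^ n) (k / k.gcd n) := by
  rw [IsPrimitiveRoot.iff_orderOf, (hζ.isOfFinOrder hk).orderOf_pow, ← hζ.eq_orderOf]

variable {K : Type*} [Field K] {ζ : K} {n : ℕ}

theorem prod_range_add_pow_mul (hζ : IsPrimitiveRoot ζ n) (hn : Odd n) (x y : K) :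
    ∏ i ∈ range n, (x + ζ ^ i * y) = x ^ n + y ^ n := by
  have := congrArg (Polynomial.eval x) (X_pow_sub_C_eq_prod hζ hn.pos (rfl : (-y) ^ n = _))
  simpa [Polynomial.eval_prod, hn.neg_pow] using this.symm

theorem prod_range_pow_of_odd (hζ : IsPrimitiveRoot ζ n) (hn : Odd n) :
    ∏ i ∈ range n, ζ ^ i = 1 := by
  simpa [zero_pow hn.pos.ne'] using hζ.prod_range_add_pow_mul hn 0 1

theorem prod_range_one_add_pow (hζ : IsPrimitiveRoot ζ n) (hn : Odd n) :
    ∏ i ∈ range n, (1 + ζ ^ i) = 2 := by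
  simpa [one_add_one_eq_two] using hζ.prod_range_add_pow_mul hn 1 1

theorem prod_range_one_add_pow_pow {m : ℕ} (hζ : IsPrimitiveRoot ζ m) (hm : Odd m) (n : ℕ) :
    ∏ i ∈ range m, (1 + (ζ ^ n) ^ i) = 2 ^ m.gcd n := by
  have hη := hζ.pow_div_gcd hm.pos.ne' n
  have hm_eq : m.gcd n * (m / m.gcd n) = m := Nat.mul_div_cancel' (m.gcd_dvd_left n)
  have hodd : Odd (m / m.gcd n) := (Nat.odd_mul.mp (hm_eq ▸ hm)).2
  have hper : Function.Periodic (fun i => 1 + (ζ ^ n) ^ i) (m / m.gcd n) := fun i => by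
    simp only [pow_add, hη.pow_eq_one, mul_one]
  conv_lhs => rw [← hm_eq]
  rw [hper.prod_range_mul, hη.prod_range_one_add_pow hodd]

theorem prod_range_add_inv_add_pow_add_inv (hζ : IsPrimitiveRoot ζ n) (hn : Odd n) {α : K}
    (hα : α ≠ 0) :
    ∏ j ∈ range n, (α + α⁻¹ + (ζ ^ j + (ζ ^ j)⁻¹)) = (1 + α ^ n) ^ 2 / α ^ n := by
  have hζ0 : ζ ≠ 0 := hζ.ne_zero hn.pos.ne'
  have hsum : ∏ j ∈ range n, (α + ζ ^ j) = 1 + α ^ n := by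
    simpa [add_comm] using hζ.prod_range_add_pow_mul hn α 1
  have hprod : ∏ j ∈ range n, (1 + ζ ^ j * α) = 1 + α ^ n := by
    simpa using hζ.prod_range_add_pow_mul hn 1 α
  rw [prod_congr rfl fun j _ => add_inv_add_add_inv hα (pow_ne_zero j hζ0), prod_div_distrib,
    prod_mul_distrib, prod_mul_distrib, hsum, hprod, prod_const, card_range,
    hζ.prod_range_pow_of_odd hn, mul_one, sq]

theorem prod_range_prod_range_add_inv_add_pow_add_inv {m : ℕ} {ω : K}
    (hζ : IsPrimitiveRoot ζ m) (hω : IsPrimitiveRoot ω n) (hm : Odd m) (hn : Odd n) :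
    ∏ i ∈ range m, ∏ j ∈ range n, (ζ ^ i + (ζ ^ i)⁻¹ + (ω ^ j + (ω ^ j)⁻¹)) = 4 ^ m.gcd n := by
  have hζ0 : ζ ≠ 0 := hζ.ne_zero hm.pos.ne'
  calc _ = ∏ i ∈ range m, (1 + (ζ ^ n) ^ i) ^ 2 / (ζ ^ i) ^ n :=
        prod_congr rfl fun i _ => by
          rw [hω.prod_range_add_inv_add_pow_add_inv hn (pow_ne_zero i hζ0), pow_right_comm]
    _ = (∏ i ∈ range m, (1 + (ζ ^ n) ^ i)) ^ 2 / (∏ i ∈ range m, ζ ^ i) ^ n := by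
        rw [prod_div_distrib, prod_pow, prod_pow]
    _ = 4 ^ m.gcd n := by
        rw [hζ.prod_range_one_add_pow_pow hm, hζ.prod_range_pow_of_odd hm, one_pow, div_one,
          ← pow_mul, mul_comm, pow_mul]
        norm_num

end IsPrimitiveRoot

theorem Complex.ofReal_two_cos_two_mul_nat_mul_pi_div (k i : ℕ) :
    ((2 * Real.cos (2 * i * π / k) : ℝ) : ℂ) =
      exp (2 * π * I / k) ^ i + (exp (2 * π * I / k) ^ i)⁻¹ := by
  rw [← exp_nat_mul, ← exp_neg]
  push_cast
  rw [two_cos]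
  congr 2 <;> ring

noncomputable def torusEigenvalueProduct (m n : ℕ) : ℝ :=
  ∏ i ∈ Finset.Icc 1 m, ∏ j ∈ Finset.Icc 1 n,
    (2 * Real.cos (2 * i * π / m) + 2 * Real.cos (2 * j * π / n))

theorem torusEigenvalueProduct_comm (m n : ℕ) :
    torusEigenvalueProduct m n = torusEigenvalueProduct n m := by
  unfold torusEigenvalueProduct
  rw [prod_comm]
  simp_rw [add_comm]

theorem torusEigenvalueProduct_eq_zero_of_even_left {m n : ℕ} (hm : Even m) (hm0 : 0 < m)
    (hn : 0 < n) : torusEigenvalueProduct m n = 0 := by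
  obtain ⟨k, rfl⟩ := hm
  refine prod_eq_zero (i := k) (mem_Icc.mpr ⟨by omega, by omega⟩) <|
    prod_eq_zero (i := n) (mem_Icc.mpr ⟨hn, le_rfl⟩) ?_
  have hk : 2 * (k : ℝ) * π / ((k + k : ℕ) : ℝ) = π := by
    have : (k : ℝ) ≠ 0 := by norm_cast; omega
    push_cast
    field_simp
    ring
  have hn' : 2 * (n : ℝ) * π / n = 2 * π := by
    have : (n : ℝ) ≠ 0 := by positivity
    field_simp
  rw [hk, hn', cos_pi, cos_two_pi]
  norm_num

theorem ofReal_torusEigenvalueProduct {m n : ℕ} (hm : 0 < m) (hn : 0 < n) :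
    (torusEigenvalueProduct m n : ℂ) =
      ∏ i ∈ range m, ∏ j ∈ range n,
        (Complex.exp (2 * π * Complex.I / m) ^ i + (Complex.exp (2 * π * Complex.I / m) ^ i)⁻¹ +
          (Complex.exp (2 * π * Complex.I / n) ^ j +
            (Complex.exp (2 * π * Complex.I / n) ^ j)⁻¹)) := by
  have hζ := (Complex.isPrimitiveRoot_exp m hm.ne').pow_eq_one
  have hω := (Complex.isPrimitiveRoot_exp n hn.ne').pow_eq_one
  simp only [torusEigenvalueProduct, Complex.ofReal_prod, Complex.ofReal_add,
    Complex.ofReal_two_cos_two_mul_nat_mul_pi_div]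
  rw [prod_Icc_one_eq_prod_range (by simp only [hζ, pow_zero])]
  exact prod_congr rfl fun i _ => prod_Icc_one_eq_prod_range (by simp only [hω, pow_zero])

theorem prod_torus_eigenvalues (m n : ℕ) (hm : 1 ≤ m) (hn : 1 ≤ n) :
    (∏ i ∈ Finset.Icc 1 m, ∏ j ∈ Finset.Icc 1 n,
        (2 * Real.cos (2 * i * π / m) + 2 * Real.cos (2 * j * π / n))) =
      if Odd m ∧ Odd n then (4 : ℝ) ^ Nat.gcd m n else 0 := by
  change torusEigenvalueProduct m n = _
  split_ifs with hodd
  · apply Complex.ofReal_injective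
    rw [ofReal_torusEigenvalueProduct hm hn,
      (Complex.isPrimitiveRoot_exp m (by omega)).prod_range_prod_range_add_inv_add_pow_add_inv
        (Complex.isPrimitiveRoot_exp n (by omega)) hodd.1 hodd.2]
    norm_cast
  · rcases not_and_or.mp hodd with hm_even | hn_even
    · exact torusEigenvalueProduct_eq_zero_of_even_left (Nat.not_odd_iff_even.mp hm_even) hm hn
    · rw [torusEigenvalueProduct_comm]
      exact torusEigenvalueProduct_eq_zero_of_even_left (Nat.not_odd_iff_even.mp hn_even) hn hm
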